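/- Fix 0 < α < 1 and positive definite operators B, C on a finite-dimensional complex Hilbert space. If log B ≤ log C, then for every positive definite A, tr(exp(α log A + (1−α) log B)) ≤ tr(exp(α log A + (1−α) log C)). -/

import Mathlib

open Matrix Filter
open scoped ComplexOrder

/-- Functional calculus for Hermitian matrices: apply `f` to the eigenvalues. -/
noncomputable def mfun {d : ℕ} (f : ℝ → ℝ) (A : Matrix (Fin d) (Fin d) ℂ) :
    Matrix (Fin d) (Fin d) ℂ :=
  if hA : A.IsHermitian then
    (hA.eigenvectorUnitary : Matrix (Fin d) (Fin d) ℂ) *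
      Matrix.diagonal (fun i => (f (hA.eigenvalues i) : ℂ)) *
      star (hA.eigenvectorUnitary : Matrix (Fin d) (Fin d) ℂ)
  else 0

noncomputable def mexp {d : ℕ} (A : Matrix (Fin d) (Fin d) ℂ) : Matrix (Fin d) (Fin d) ℂ :=
  mfun Real.exp A

noncomputable def mlog {d : ℕ} (A : Matrix (Fin d) (Fin d) ℂ) : Matrix (Fin d) (Fin d) ℂ :=
  mfun Real.log A

/-- The Löwner order: `A ≤ B` iff `B - A` is positive semidefinite. -/
def loewnerLE {d : ℕ} (A B : Matrix (Fin d) (Fin d) ℂ) : Prop :=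
  (B - A).PosSemidef

/-- The quadratic form ⟨Ax, x⟩. -/
noncomputable def qf {d : ℕ} (A : Matrix (Fin d) (Fin d) ℂ) (x : Fin d → ℂ) : ℂ :=
  star x ⬝ᵥ A.mulVec x

/-- The rank-one projection x ⊗ x. -/
noncomputable def rankOneProj {d : ℕ} (x : Fin d → ℂ) : Matrix (Fin d) (Fin d) ℂ :=
  Matrix.vecMulVec x (star x)

/-!
The `α log A` terms cancel in the difference of the two exponents, so it suffices that
`X ↦ tr f(X)` is monotone in the Löwner order for a monotone convex `f` (here `exp`).
If `M ≤ N` and `(uᵢ)` is an orthonormal eigenbasis of `M`, then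
`f(λᵢ(M)) = f⟨uᵢ, M uᵢ⟩ ≤ f⟨uᵢ, N uᵢ⟩ ≤ ⟨uᵢ, f(N) uᵢ⟩`, the last step being Jensen's inequality
for the spectral distribution of `N` in the unit vector `uᵢ`; summing over `i` gives
`tr f(M) ≤ tr f(N)`.
-/

namespace Matrix

variable {𝕜 n : Type*} [RCLike 𝕜] [Fintype n] [DecidableEq n]

theorem trace_eq_sum_dotProduct_mulVec (X : Matrix n n 𝕜)
    (b : OrthonormalBasis n 𝕜 (EuclideanSpace 𝕜 n)) :
    X.trace = ∑ i, star ⇑(b i) ⬝ᵥ X *ᵥ ⇑(b i) := by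
  rw [← trace_toLin_eq X (EuclideanSpace.basisFun n 𝕜).toBasis,
    ← toEuclideanLin_eq_toLin_orthonormal, LinearMap.trace_eq_sum_inner _ b]
  refine Finset.sum_congr rfl fun i _ => ?_
  rw [EuclideanSpace.inner_eq_star_dotProduct, dotProduct_comm]
  rfl

namespace IsHermitian

variable {M N : Matrix n n 𝕜}

theorem trace_cfc (hM : M.IsHermitian) (f : ℝ → ℝ) :
    (cfc f M).trace = ∑ i, (f (hM.eigenvalues i) : 𝕜) := by
  rw [cfc_eq hM, IsHermitian.cfc, Unitary.conjStarAlgAut_apply, trace_mul_cycle,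
    Unitary.coe_star_mul_self, one_mul, trace_diagonal]
  rfl

theorem re_dotProduct_cfc_mulVec (hN : N.IsHermitian) (f : ℝ → ℝ) (x : n → 𝕜) :
    RCLike.re (star x ⬝ᵥ cfc f N *ᵥ x) =
      ∑ j, f (hN.eigenvalues j) * ‖(star (hN.eigenvectorUnitary : Matrix n n 𝕜) *ᵥ x) j‖ ^ 2 := by
  set y := star (hN.eigenvectorUnitary : Matrix n n 𝕜) *ᵥ x
  have hy : star x ᵥ* (hN.eigenvectorUnitary : Matrix n n 𝕜) = star y := by
    rw [star_mulVec, star_eq_conjTranspose, conjTranspose_conjTranspose]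
  rw [cfc_eq hN, IsHermitian.cfc, Unitary.conjStarAlgAut_apply, ← mulVec_mulVec, ← mulVec_mulVec,
    dotProduct_mulVec, hy, dotProduct, map_sum]
  refine Finset.sum_congr rfl fun j _ => ?_
  rw [mulVec_diagonal, Pi.star_apply, Function.comp_apply, Function.comp_apply, mul_left_comm,
    RCLike.star_def, RCLike.conj_mul, RCLike.re_ofReal_mul, ← RCLike.ofReal_pow, RCLike.ofReal_re]

theorem map_re_dotProduct_mulVec_le (hN : N.IsHermitian) {f : ℝ → ℝ}
    (hf : ConvexOn ℝ Set.univ f) {x : n → 𝕜} (hx : star x ⬝ᵥ x = 1) :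
    f (RCLike.re (star x ⬝ᵥ N *ᵥ x)) ≤ RCLike.re (star x ⬝ᵥ cfc f N *ᵥ x) := by
  -- `f = 1` shows the weights sum to `1`, and `f = id` makes `⟨x, N x⟩` their barycentre.
  have hweights := hN.re_dotProduct_cfc_mulVec (fun _ => 1) x
  rw [cfc_const_one ℝ N, one_mulVec, hx, RCLike.one_re] at hweights
  simp only [one_mul] at hweights
  conv_lhs => rw [← cfc_id' ℝ N, hN.re_dotProduct_cfc_mulVec]
  rw [hN.re_dotProduct_cfc_mulVec]
  simpa only [smul_eq_mul, mul_comm] using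
    hf.map_sum_le (fun j _ => sq_nonneg _) hweights.symm (fun j _ => Set.mem_univ _)

theorem re_trace_cfc_le_of_posSemidef_sub (hM : M.IsHermitian) {f : ℝ → ℝ}
    (hf_mono : Monotone f) (hf_conv : ConvexOn ℝ Set.univ f) (h : (N - M).PosSemidef) :
    RCLike.re (cfc f M).trace ≤ RCLike.re (cfc f N).trace := by
  have hN : N.IsHermitian := by simpa using h.isHermitian.add hM
  set b := hM.eigenvectorBasis
  have hb_norm (i : n) : star ⇑(b i) ⬝ᵥ ⇑(b i) = 1 := by
    rw [dotProduct_comm, ← EuclideanSpace.inner_eq_star_dotProduct, b.inner_eq_one]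
  have heigen_le (i : n) : hM.eigenvalues i ≤ RCLike.re (star ⇑(b i) ⬝ᵥ N *ᵥ ⇑(b i)) := by
    have := h.re_dotProduct_nonneg (b i)
    rw [sub_mulVec, dotProduct_sub, map_sub, ← hM.eigenvalues_eq] at this
    linarith
  rw [hM.trace_cfc, trace_eq_sum_dotProduct_mulVec _ b, map_sum, map_sum]
  refine Finset.sum_le_sum fun i _ => ?_
  calc RCLike.re (f (hM.eigenvalues i) : 𝕜)
      = f (hM.eigenvalues i) := RCLike.ofReal_re _
    _ ≤ f (RCLike.re (star ⇑(b i) ⬝ᵥ N *ᵥ ⇑(b i))) := hf_mono (heigen_le i)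
    _ ≤ _ := hN.map_re_dotProduct_mulVec_le hf_conv (hb_norm i)

end IsHermitian
end Matrix

theorem mfun_eq_cfc {d : ℕ} (f : ℝ → ℝ) (A : Matrix (Fin d) (Fin d) ℂ) :
    mfun f A = cfc f A := by
  by_cases hA : A.IsHermitian
  · rw [mfun, dif_pos hA, hA.cfc_eq, IsHermitian.cfc, Unitary.conjStarAlgAut_apply]
    rfl
  · rw [mfun, dif_neg hA]
    exact (cfc_apply_of_not_predicate (f := f) A hA).symm

theorem trace_exp_chaotic_mono_general {d : ℕ} (α : ℝ) (hα1 : α < 1)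
    (B C : Matrix (Fin d) (Fin d) ℂ)
    (hBC : loewnerLE (mlog B) (mlog C)) :
    ∀ A : Matrix (Fin d) (Fin d) ℂ, A.PosDef →
      (mexp ((α : ℂ) • mlog A + ((1 - α : ℝ) : ℂ) • mlog B)).trace.re ≤
        (mexp ((α : ℂ) • mlog A + ((1 - α : ℝ) : ℂ) • mlog C)).trace.re := by
  intro A _
  simp only [mexp, mlog, mfun_eq_cfc] at hBC ⊢
  have hselfAdjoint :
      IsSelfAdjoint ((α : ℂ) • cfc Real.log A + ((1 - α : ℝ) : ℂ) • cfc Real.log B) := by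
    simp only [Complex.coe_smul]
    exact (IsSelfAdjoint.all α |>.smul (cfc_predicate _ A)).add
      (IsSelfAdjoint.all (1 - α) |>.smul (cfc_predicate _ B))
  refine IsHermitian.re_trace_cfc_le_of_posSemidef_sub hselfAdjoint Real.exp_monotone
    convexOn_exp ?_
  rw [add_sub_add_left_eq_sub, ← smul_sub]
  exact hBC.smul (Complex.zero_le_real.mpr (by linarith))

/-- if `log B ≤ log C` then for every positive definite `A`,
`tr exp(α log A + (1−α) log B) ≤ tr exp(α log A + (1−α) log C)`. -/
theorem trace_exp_chaotic_mono {d : ℕ} (α : ℝ) (hα0 : 0 < α) (hα1 : α < 1)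
    (B C : Matrix (Fin d) (Fin d) ℂ) (hB : B.PosDef) (hC : C.PosDef)
    (hBC : loewnerLE (mlog B) (mlog C)) :
    ∀ A : Matrix (Fin d) (Fin d) ℂ, A.PosDef →
      (mexp ((α : ℂ) • mlog A + ((1 - α : ℝ) : ℂ) • mlog B)).trace.re ≤
        (mexp ((α : ℂ) • mlog A + ((1 - α : ℝ) : ℂ) • mlog C)).trace.re :=
  trace_exp_chaotic_mono_general α hα1 B C hBC
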